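/- Let X and Y be complex square matrices of the same size n×n. Then exp(X + Y) = lim_{N→∞} (exp(X/N)·(I + Y/N))^N, where the limit is taken entrywise (equivalently, in the norm topology on n×n matrices). -/

import Mathlib

/-!
Write `a_N = exp (X/N) (1 + Y/N)` and `b_N = exp ((X+Y)/N)`, so that `b_N ^ N = exp (X+Y)`.
Both `t ↦ exp (t X) (1 + t Y)` and `t ↦ exp (t (X+Y))` have value `1` and derivative `X + Y`
at `t = 0`, hence `N (a_N - 1)` and `N (b_N - 1)` both tend to `X + Y`. Therefore
`‖a_N‖, ‖b_N‖ ≤ 1 + C/N` and `N ‖a_N - b_N‖ → 0`, and telescoping gives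
`‖a_N^N - b_N^N‖ ≤ N (1 + C/N)^(N-1) ‖a_N - b_N‖ ≤ e^C N ‖a_N - b_N‖ → 0`.
-/

open Matrix NormedSpace Filter Topology

theorem norm_pow_sub_pow_le {𝔸 : Type*} [NormedRing 𝔸] [NormOneClass 𝔸] {a b : 𝔸} {M : ℝ}
    (ha : ‖a‖ ≤ M) (hb : ‖b‖ ≤ M) (n : ℕ) :
    ‖a ^ n - b ^ n‖ ≤ n * M ^ (n - 1) * ‖a - b‖ := by
  induction n with
  | zero => simp
  | succ n ih =>
    have hM : 0 ≤ M := (norm_nonneg a).trans ha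
    have hbn : ‖b ^ n‖ ≤ M ^ n := (norm_pow_le b n).trans (pow_le_pow_left₀ (norm_nonneg b) hb n)
    calc ‖a ^ (n + 1) - b ^ (n + 1)‖ = ‖a * (a ^ n - b ^ n) + (a - b) * b ^ n‖ := by
          rw [pow_succ', pow_succ']; noncomm_ring
      _ ≤ M * (n * M ^ (n - 1) * ‖a - b‖) + ‖a - b‖ * M ^ n := by
          refine (norm_add_le _ _).trans (add_le_add ?_ ?_)
          · exact (norm_mul_le _ _).trans (mul_le_mul ha ih (norm_nonneg _) hM)
          · exact (norm_mul_le _ _).trans (mul_le_mul_of_nonneg_left hbn (norm_nonneg _))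
      _ = (n + 1 : ℕ) * M ^ n * ‖a - b‖ := by
          rcases n with _ | n
          · simp
          · push_cast; ring

theorem norm_pow_sub_pow_le_exp {𝔸 : Type*} [NormedRing 𝔸] [NormOneClass 𝔸] {a b : 𝔸} {C : ℝ}
    {n : ℕ} (ha : ‖a - 1‖ ≤ C / n) (hb : ‖b - 1‖ ≤ C / n) :
    ‖a ^ n - b ^ n‖ ≤ Real.exp C * (n * ‖a - b‖) := by
  have hbound {c : 𝔸} (hc : ‖c - 1‖ ≤ C / n) : ‖c‖ ≤ Real.exp (C / n) :=
    calc ‖c‖ = ‖(c - 1) + 1‖ := by rw [sub_add_cancel]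
      _ ≤ C / n + 1 := (norm_add_le _ _).trans (by rw [norm_one]; linarith)
      _ ≤ Real.exp (C / n) := Real.add_one_le_exp _
  rcases n.eq_zero_or_pos with rfl | hn
  · simp
  have hpow : Real.exp (C / n) ^ (n - 1) ≤ Real.exp C :=
    calc Real.exp (C / n) ^ (n - 1) ≤ Real.exp (C / n) ^ n :=
          pow_le_pow_right₀ (Real.one_le_exp ((norm_nonneg _).trans ha)) (n.sub_le 1)
      _ = Real.exp C := by rw [← Real.exp_nat_mul]; field_simp
  calc ‖a ^ n - b ^ n‖ ≤ n * Real.exp (C / n) ^ (n - 1) * ‖a - b‖ :=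
        norm_pow_sub_pow_le (hbound ha) (hbound hb) n
    _ ≤ Real.exp C * (n * ‖a - b‖) := by
        rw [mul_comm (n : ℝ), mul_assoc]; gcongr

theorem tendsto_natCast_smul_sub_of_hasDerivAt {𝕜 E : Type*} [RCLike 𝕜] [NormedAddCommGroup E]
    [NormedSpace 𝕜 E] {f : 𝕜 → E} {f' : E} (hf : HasDerivAt f f' 0) :
    Tendsto (fun N : ℕ => (N : 𝕜) • (f (N : 𝕜)⁻¹ - f 0)) atTop (𝓝 f') := by
  have hinv : Tendsto (fun N : ℕ => (N : 𝕜)⁻¹) atTop (𝓝[≠] 0) :=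
    tendsto_nhdsWithin_iff.2 ⟨tendsto_inv_atTop_nhds_zero_nat,
      eventually_ge_atTop 1 |>.mono fun N hN => by simpa using Nat.one_le_iff_ne_zero.1 hN⟩
  simpa [Function.comp_def] using hf.tendsto_slope_zero.comp hinv

section BanachAlgebra

variable {𝕂 𝔸 : Type*} [RCLike 𝕂] [NormedRing 𝔸] [NormedAlgebra 𝕂 𝔸] [CompleteSpace 𝔸]
  [NormOneClass 𝔸]

theorem tendsto_pow_of_tendsto_natCast_smul_sub_one {a : ℕ → 𝔸} {z : 𝔸}
    (ha : Tendsto (fun N : ℕ => (N : 𝕂) • (a N - 1)) atTop (𝓝 z)) :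
    Tendsto (fun N : ℕ => a N ^ N) atTop (𝓝 (exp z)) := by
  set b : ℕ → 𝔸 := fun N => exp ((N : 𝕂)⁻¹ • z)
  have hb : Tendsto (fun N : ℕ => (N : 𝕂) • (b N - 1)) atTop (𝓝 z) := by
    simpa using tendsto_natCast_smul_sub_of_hasDerivAt (hasDerivAt_exp_smul_const z (0 : 𝕂))
  have hb_pow {N : ℕ} (hN : N ≠ 0) : b N ^ N = exp z := by
    let : NormedAlgebra ℚ 𝔸 := NormedAlgebra.restrictScalars ℚ 𝕂 𝔸
    rw [← NormedSpace.exp_nsmul, ← Nat.cast_smul_eq_nsmul 𝕂, smul_smul,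
      mul_inv_cancel₀ (Nat.cast_ne_zero.2 hN), one_smul]
  have hab : Tendsto (fun N : ℕ => (N : ℝ) * ‖a N - b N‖) atTop (𝓝 0) := by
    have := tendsto_zero_iff_norm_tendsto_zero.1 (by simpa using ha.sub hb)
    refine this.congr fun N => ?_
    rw [← smul_sub, sub_sub_sub_cancel_right, norm_smul, RCLike.norm_natCast]
  set C := ‖z‖ + 1
  have hC {c : ℕ → 𝔸} (hc : Tendsto (fun N : ℕ => (N : 𝕂) • (c N - 1)) atTop (𝓝 z)) :
      ∀ᶠ N : ℕ in atTop, ‖c N - 1‖ ≤ C / N := by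
    filter_upwards [hc.norm.eventually (eventually_le_nhds (lt_add_one ‖z‖)),
      eventually_gt_atTop 0] with N hN hN0
    rw [norm_smul, RCLike.norm_natCast] at hN
    rw [le_div_iff₀ (by exact_mod_cast hN0)]
    linarith
  rw [tendsto_iff_norm_sub_tendsto_zero]
  refine squeeze_zero' (Eventually.of_forall fun N => norm_nonneg _) ?_
    (by simpa using hab.const_mul (Real.exp C))
  filter_upwards [hC ha, hC hb, eventually_ne_atTop 0] with N haN hbN hN
  rw [← hb_pow hN]
  exact norm_pow_sub_pow_le_exp haN hbN

theorem tendsto_exp_smul_mul_one_add_smul_pow (x y : 𝔸) :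
    Tendsto (fun N : ℕ => (exp ((N : 𝕂)⁻¹ • x) * (1 + (N : 𝕂)⁻¹ • y)) ^ N) atTop
      (𝓝 (exp (x + y))) := by
  have hf : HasDerivAt (fun t : 𝕂 => exp (t • x) * (1 + t • y)) (x + y) 0 := by
    simpa using (hasDerivAt_exp_smul_const x (0 : 𝕂)).fun_mul
      (((hasDerivAt_id (0 : 𝕂)).smul_const y).const_add 1)
  exact tendsto_pow_of_tendsto_natCast_smul_sub_one (by
    simpa using tendsto_natCast_smul_sub_of_hasDerivAt hf)

end BanachAlgebra

theorem stmt7 (n : ℕ) (X Y : Matrix (Fin n) (Fin n) ℂ) :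
    Tendsto
      (fun N : ℕ => (exp (((N : ℂ))⁻¹ • X) * (1 + ((N : ℂ))⁻¹ • Y)) ^ N)
      atTop (nhds (exp (X + Y))) := by
  -- the `L∞` operator norm satisfies `‖1‖ = 1` only when the index type is nonempty
  rcases isEmpty_or_nonempty (Fin n) with _ | _
  · exact tendsto_const_nhds.congr fun N => Subsingleton.elim _ _
  · let : NormedRing (Matrix (Fin n) (Fin n) ℂ) := Matrix.linftyOpNormedRing
    let : NormedAlgebra ℂ (Matrix (Fin n) (Fin n) ℂ) := Matrix.linftyOpNormedAlgebra
    exact tendsto_exp_smul_mul_one_add_smul_pow X Y
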